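/- The assignment a_m ↦ 1 if n+1 ∉ m, and a_m ↦ a_{m \ {n+1}} if n+1 ∈ m, extends to a well-defined group homomorphism π : G_{n+1}^{k+1} → G_n^k. -/

import Mathlib

/-- Generator index: a `k`-element subset of `{1,…,n}` (modelled as `Fin n`). -/
abbrev GenIdx (n k : ℕ) := {m : Finset (Fin n) // m.card = k}

/-- Relators of the group `G_n^k`. -/
def gnkRels (n k : ℕ) : Set (FreeGroup (GenIdx n k)) :=
  {r | (∃ m : GenIdx n k, r = FreeGroup.of m ^ 2) ∨
    (∃ m m' : GenIdx n k, (m.1 ∩ m'.1).card < k - 1 ∧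
      r = FreeGroup.of m * FreeGroup.of m' * (FreeGroup.of m)⁻¹ * (FreeGroup.of m')⁻¹) ∨
    (∃ (U : Finset (Fin n)) (L : List (GenIdx n k)), U.card = k + 1 ∧ L.Nodup ∧
      (∀ m : GenIdx n k, m ∈ L ↔ m.1 ⊆ U) ∧ r = (L.map FreeGroup.of).prod ^ 2)}

/-- The group `G_n^k`, presented by generators `a_m` and the relations above. -/
abbrev Gnk (n k : ℕ) := PresentedGroup (gnkRels n k)

/-- The generator `a_m` of `G_n^k`. -/
abbrev gnkGen {n k : ℕ} (m : GenIdx n k) : Gnk n k := PresentedGroup.of m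


/-!
The indices of `G_{n+1}^{k+1}` containing `n+1` are exactly the sets `m ∪ {n+1}` with `m` an index
of `G_n^k`, so `π` sends `a_{m ∪ {n+1}}` to `a_m` and every other generator to `1`. Each relator
goes to a relator: squares to squares or to `1`; if `|M ∩ M'| < k` then either a factor becomes
`1` or `|m ∩ m'| = |M ∩ M'| - 1 < k - 1`; and in the product over the `(k+1)`-subsets of a
`(k+2)`-set `U`, once the factors equal to `1` are dropped, what remains is the product over the
`k`-subsets of `U \ {n+1}` (in the induced order) if `n+1 ∈ U`, and the empty product otherwise.
-/

open Finset Function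

namespace Finset

variable {n : ℕ}

def insertLast (s : Finset (Fin n)) : Finset (Fin (n + 1)) :=
  insert (Fin.last n) (s.map Fin.castSuccEmb)

lemma last_mem_insertLast (s : Finset (Fin n)) : Fin.last n ∈ insertLast s :=
  mem_insert_self _ _

lemma last_notMem_map_castSuccEmb (s : Finset (Fin n)) : Fin.last n ∉ s.map Fin.castSuccEmb := by
  simp [Fin.castSucc_ne_last]

lemma card_insertLast (s : Finset (Fin n)) : (insertLast s).card = s.card + 1 := by
  rw [insertLast, card_insert_of_notMem (last_notMem_map_castSuccEmb s), card_map]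

lemma insertLast_inter_insertLast (s t : Finset (Fin n)) :
    insertLast s ∩ insertLast t = insertLast (s ∩ t) := by
  rw [insertLast, insertLast, insertLast, ← insert_inter_distrib, map_inter]

lemma insertLast_subset_insertLast_iff {s t : Finset (Fin n)} :
    insertLast s ⊆ insertLast t ↔ s ⊆ t := by
  rw [insertLast, insertLast, insert_subset_insert_iff (last_notMem_map_castSuccEmb s),
    map_subset_map]

lemma insertLast_injective : Injective (insertLast : Finset (Fin n) → Finset (Fin (n + 1))) :=
  fun _ _ h => (insertLast_subset_insertLast_iff.1 h.le).antisymm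
    (insertLast_subset_insertLast_iff.1 h.ge)

lemma exists_insertLast_eq {S : Finset (Fin (n + 1))} (h : Fin.last n ∈ S) :
    ∃ s, insertLast s = S := by
  refine ⟨S.preimage Fin.castSucc (Fin.castSucc_injective n).injOn, ?_⟩
  ext x
  cases x using Fin.lastCases <;> simp [insertLast, h, Fin.castSucc_ne_last]

lemma insertLast_eq_of_image_castSucc_eq {s : Finset (Fin n)} {S : Finset (Fin (n + 1))}
    (h : Fin.last n ∈ S) (hs : s.image Fin.castSucc = S.erase (Fin.last n)) :
    insertLast s = S := by
  rw [insertLast, map_eq_image, Fin.coe_castSuccEmb, hs, insert_erase h]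

end Finset

lemma List.prod_map_elim_eq_prod_filterMap {α β M : Type*} [Monoid M] (L : List α)
    (f : α → Option β) (g : β → M) :
    (L.map fun a => (f a).elim 1 g).prod = ((L.filterMap f).map g).prod := by
  induction L with
  | nil => rfl
  | cons a L ih => cases h : f a <;> simp [h, ih]

namespace Gnk

variable {n k : ℕ}

lemma gnkGen_sq (m : GenIdx n k) : gnkGen m ^ 2 = 1 :=
  (map_pow (PresentedGroup.mk _) _ 2).symm.trans (PresentedGroup.one_of_mem (Or.inl ⟨m, rfl⟩))

lemma gnkGen_commute {m m' : GenIdx n k} (h : (m.1 ∩ m'.1).card < k - 1) :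
    Commute (gnkGen m) (gnkGen m') := by
  have := PresentedGroup.one_of_mem (rels := gnkRels n k) (Or.inr (Or.inl ⟨m, m', h, rfl⟩))
  simp only [map_mul, map_inv] at this
  exact commutatorElement_eq_one_iff_commute.1 this

lemma prod_gnkGen_sq {U : Finset (Fin n)} {L : List (GenIdx n k)} (hU : U.card = k + 1)
    (hL : L.Nodup) (hLU : ∀ m : GenIdx n k, m ∈ L ↔ m.1 ⊆ U) :
    (L.map gnkGen).prod ^ 2 = 1 := by
  have := PresentedGroup.one_of_mem (rels := gnkRels n k)
    (Or.inr (Or.inr ⟨U, L, hU, hL, hLU, rfl⟩))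
  rwa [map_pow, map_list_prod, List.map_map] at this

end Gnk

namespace GenIdx

variable {n k : ℕ}

def liftLast (m : GenIdx n k) : GenIdx (n + 1) (k + 1) :=
  ⟨insertLast m.1, by rw [card_insertLast, m.2]⟩

lemma liftLast_injective : Injective (liftLast : GenIdx n k → GenIdx (n + 1) (k + 1)) :=
  fun _ _ h => Subtype.ext (insertLast_injective (congrArg Subtype.val h))

noncomputable def dropLast : GenIdx (n + 1) (k + 1) → Option (GenIdx n k) :=
  partialInv liftLast

lemma dropLast_eq_some_iff {M : GenIdx (n + 1) (k + 1)} {m : GenIdx n k} :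
    dropLast M = some m ↔ liftLast m = M :=
  liftLast_injective.isPartialInv m M

lemma dropLast_eq_none {M : GenIdx (n + 1) (k + 1)} (h : Fin.last n ∉ M.1) : dropLast M = none :=
  Option.eq_none_iff_forall_ne_some.2 fun m hm =>
    h (dropLast_eq_some_iff.1 hm ▸ last_mem_insertLast m.1)

noncomputable def projGen (M : GenIdx (n + 1) (k + 1)) : Gnk n k :=
  (dropLast M).elim 1 gnkGen

lemma projGen_sq (M : GenIdx (n + 1) (k + 1)) : projGen M ^ 2 = 1 := by
  cases h : dropLast M with
  | none => simp [projGen, h]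
  | some m => simpa [projGen, h] using Gnk.gnkGen_sq m

lemma projGen_commute {M M' : GenIdx (n + 1) (k + 1)} (h : (M.1 ∩ M'.1).card < k) :
    Commute (projGen M) (projGen M') := by
  cases hM : dropLast M with
  | none => simp [projGen, hM]
  | some m =>
    cases hM' : dropLast M' with
    | none => simp [projGen, hM']
    | some m' =>
      simp only [projGen, hM, hM', Option.elim_some]
      rw [dropLast_eq_some_iff] at hM hM'
      subst hM hM'
      apply Gnk.gnkGen_commute
      have hcard : (m.1 ∩ m'.1).card + 1 < k := by
        rwa [← card_insertLast, ← insertLast_inter_insertLast]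
      exact Nat.lt_sub_of_add_lt hcard

lemma filterMap_dropLast_eq_nil {U : Finset (Fin (n + 1))} {L : List (GenIdx (n + 1) (k + 1))}
    (hU : Fin.last n ∉ U) (hLU : ∀ M ∈ L, M.1 ⊆ U) : L.filterMap dropLast = [] :=
  List.filterMap_eq_nil_iff.2 fun M hM => dropLast_eq_none fun h => hU (hLU M hM h)

lemma mem_filterMap_dropLast_iff {u : Finset (Fin n)} {L : List (GenIdx (n + 1) (k + 1))}
    (hLU : ∀ M, M ∈ L ↔ M.1 ⊆ insertLast u) (m : GenIdx n k) :
    m ∈ L.filterMap dropLast ↔ m.1 ⊆ u := by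
  simp only [List.mem_filterMap, dropLast_eq_some_iff, exists_eq_right', hLU]
  exact insertLast_subset_insertLast_iff

lemma prod_projGen_sq {U : Finset (Fin (n + 1))} {L : List (GenIdx (n + 1) (k + 1))}
    (hU : U.card = k + 2) (hL : L.Nodup) (hLU : ∀ M, M ∈ L ↔ M.1 ⊆ U) :
    (L.map projGen).prod ^ 2 = 1 := by
  unfold projGen
  rw [List.prod_map_elim_eq_prod_filterMap]
  by_cases hlast : Fin.last n ∈ U
  · obtain ⟨u, rfl⟩ := exists_insertLast_eq hlast
    refine Gnk.prod_gnkGen_sq (U := u) (by simpa [card_insertLast] using hU) ?_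
      (mem_filterMap_dropLast_iff hLU)
    exact hL.filterMap fun M M' m hM hM' =>
      (dropLast_eq_some_iff.1 hM).symm.trans (dropLast_eq_some_iff.1 hM')
  · rw [filterMap_dropLast_eq_nil hlast fun M => (hLU M).1]
    simp

end GenIdx

open GenIdx in
theorem exists_projection_hom_general (n k : ℕ) :
    ∃ π : Gnk (n + 1) (k + 1) →* Gnk n k,
      (∀ M : GenIdx (n + 1) (k + 1), Fin.last n ∉ M.1 → π (gnkGen M) = 1) ∧
      (∀ (M : GenIdx (n + 1) (k + 1)) (m : GenIdx n k), Fin.last n ∈ M.1 →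
        m.1.image Fin.castSucc = M.1.erase (Fin.last n) →
          π (gnkGen M) = gnkGen m) := by
  have hrels : ∀ r ∈ gnkRels (n + 1) (k + 1), FreeGroup.lift projGen r = 1 := by
    rintro r (⟨M, rfl⟩ | ⟨M, M', hcard, rfl⟩ | ⟨U, L, hU, hL, hLU, rfl⟩)
    · simpa using projGen_sq M
    · simp only [map_mul, map_inv, FreeGroup.lift_apply_of]
      exact commutatorElement_eq_one_iff_commute.2 (projGen_commute hcard)
    · simpa [map_list_prod, Function.comp_def] using prod_projGen_sq hU hL hLU
  refine ⟨PresentedGroup.toGroup hrels, fun M hM => ?_, fun M m hM hm => ?_⟩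
  · rw [PresentedGroup.toGroup.of, projGen, dropLast_eq_none hM, Option.elim_none]
  · have hMm : dropLast M = some m :=
      dropLast_eq_some_iff.2 (Subtype.ext (insertLast_eq_of_image_castSucc_eq hM hm))
    rw [PresentedGroup.toGroup.of, projGen, hMm, Option.elim_some]

/-- the assignment `a_M ↦ 1` if `n+1 ∉ M` and `a_M ↦ a_{M \ {n+1}}`
if `n+1 ∈ M` extends to a well-defined group homomorphism
`π : G_{n+1}^{k+1} → G_n^k`. -/
theorem exists_projection_hom (n k : ℕ) (hk : 2 ≤ k) (hn : k < n) :
    ∃ π : Gnk (n + 1) (k + 1) →* Gnk n k,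
      (∀ M : GenIdx (n + 1) (k + 1), Fin.last n ∉ M.1 → π (gnkGen M) = 1) ∧
      (∀ (M : GenIdx (n + 1) (k + 1)) (m : GenIdx n k), Fin.last n ∈ M.1 →
        m.1.image Fin.castSucc = M.1.erase (Fin.last n) →
          π (gnkGen M) = gnkGen m) :=
  exists_projection_hom_general n k
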